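/- Let μ be a positive measure on the unit circle (supported on an infinite set) with orthonormal zig-zag (CMV) basis χ and associated CMV matrix 𝒞 satisfying z χ = 𝒞 χ. For any Hermitian Laurent polynomial ℓ, the Gram matrix of the functional uℓ (where u[f] = ∫ f dμ) with respect to χ equals ℓ(𝒞): (uℓ)[χ χ⁺] = ℓ(𝒞). Consequently, uℓ is positive definite if and only if ℓ(𝒞) is positive definite (meaning X ℓ(𝒞) X⁺ > 0 for all finitely supported nonzero row vectors X). -/

import Mathlib

open MeasureTheory

noncomputable section

/-- The space Λ of complex Laurent polynomials. -/
abbrev Lau : Type := AddMonoidAlgebra ℂ ℤ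

/-- The substar operation f_*(z) = conj (f (1/conj z)): coefficientwise
(f_*)_j = conj (f_{-j}). -/
def substar (f : Lau) : Lau :=
  AddMonoidAlgebra.ofCoeff (Finsupp.equivMapDomain (Equiv.neg ℤ)
    (Finsupp.mapRange (fun z => (starRingEnd ℂ) z) (by simp) (AddMonoidAlgebra.coeff f)))

/-- Evaluation of a Laurent polynomial at a point of ℂ. -/
def evalL (f : Lau) (z : ℂ) : ℂ :=
  ∑ m ∈ (AddMonoidAlgebra.coeff (f)).support, (AddMonoidAlgebra.coeff (f)) m * z ^ m

/-- The quadratic form X M X⁺ of an infinite matrix on a finitely supported row vector. -/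
def quadForm (M : ℕ → ℕ → ℂ) (X : ℕ →₀ ℂ) : ℂ :=
  ∑ i ∈ X.support, ∑ j ∈ X.support, X i * M i j * (starRingEnd ℂ) (X j)

/-! Orthonormality makes `u (g * substar (χ j))` the `j`-th coordinate of `g` in the family `χ`;
applied to `ℓ * χ i = ∑ⱼ L i j • χ j` this is the Gram identity, and sesquilinearity then turns
`u (ℓ * (f * substar f))` into the quadratic form of `L` at the coordinate vector of `f`.
The zig-zag conditions make `χ` triangular for the ordering `0, 1, -1, 2, -2, …` of the exponents,
so `χ` spans `Λ`; being orthonormal, it is a basis, and `f ↦ coordinates of f` is a linear bijection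
`Λ ≃ (ℕ →₀ ℂ)` carrying one positivity condition onto the other. -/

open AddMonoidAlgebra Submodule

theorem supported_image_Iio_le_span_of_triangular {k G : Type*} [Field k]
    (χ : ℕ → AddMonoidAlgebra k G) (a : ℕ → G)
    (hsupp : ∀ n, χ n ∈ supported k k (a '' Set.Iic n)) (hlead : ∀ n, (χ n).coeff (a n) ≠ 0) :
    ∀ n, supported k k (a '' Set.Iio n) ≤ span k (Set.range χ) := by
  intro n
  induction n with
  | zero =>
    intro f hf
    rw [Set.Iio_zero_eq_empty (α := ℕ), Set.image_empty, mem_supported'] at hf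
    rw [coeff_eq_zero.1 (Finsupp.ext fun m => hf m (Set.notMem_empty m))]
    exact zero_mem _
  | succ n ih =>
    intro f hf
    rw [Set.Iio_add_one_eq_Iic] at hf
    set g := f - (f.coeff (a n) / (χ n).coeff (a n)) • χ n
    have hg : g ∈ supported k k (a '' Set.Iio n) := by
      have hg' : g ∈ supported k k (a '' Set.Iic n) := sub_mem hf (smul_mem _ _ (hsupp n))
      rw [mem_supported'] at hg' ⊢
      intro m hm
      by_cases hmn : m = a n
      · simp [g, hmn, hlead n]
      · exact hg' m (by
          rw [← Set.Iio_insert, Set.image_insert_eq, Set.mem_insert_iff, not_or]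
          exact ⟨hmn, hm⟩)
    have hfg : f = g + (f.coeff (a n) / (χ n).coeff (a n)) • χ n := by simp [g]
    rw [hfg]
    exact add_mem (ih hg) (smul_mem _ _ (subset_span ⟨n, rfl⟩))

theorem span_range_eq_top_of_triangular {k G : Type*} [Field k]
    (χ : ℕ → AddMonoidAlgebra k G) (a : ℕ → G) (ha : a.Surjective)
    (hsupp : ∀ n, χ n ∈ supported k k (a '' Set.Iic n)) (hlead : ∀ n, (χ n).coeff (a n) ≠ 0) :
    span k (Set.range χ) = ⊤ := by
  classical
  refine eq_top_iff'.2 fun f => ?_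
  obtain ⟨N, hN⟩ := (f.coeff.support.image (Function.surjInv ha)).exists_nat_subset_range
  refine supported_image_Iio_le_span_of_triangular χ a hsupp hlead N (mem_supported.2 ?_)
  intro m hm
  exact ⟨_, by simpa using hN (Finset.mem_image_of_mem _ hm), Function.surjInv_eq ha m⟩

def zigzagExponent (n : ℕ) : ℤ := if Even n then -((n : ℤ) / 2) else ((n : ℤ) + 1) / 2

@[simp] theorem zigzagExponent_two_mul (k : ℕ) : zigzagExponent (2 * k) = -k := by
  simp only [zigzagExponent, even_two_mul, if_true]
  omega

@[simp] theorem zigzagExponent_two_mul_add_one (k : ℕ) : zigzagExponent (2 * k + 1) = k + 1 := by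
  simp only [zigzagExponent, Nat.not_even_two_mul_add_one, if_false]
  omega

theorem Icc_subset_zigzagExponent_image_Iic (n : ℕ) :
    Set.Icc (-((n : ℤ) / 2)) (((n : ℤ) + 1) / 2) ⊆ zigzagExponent '' Set.Iic n := by
  rintro b ⟨hlo, hhi⟩
  rcases le_or_gt b 0 with hb | hb
  · obtain ⟨m, hm⟩ := Int.eq_ofNat_of_zero_le (neg_nonneg.2 hb)
    exact ⟨2 * m, by simp only [Set.mem_Iic]; omega, by simp; omega⟩
  · obtain ⟨m, hm⟩ := Int.eq_ofNat_of_zero_le (Int.sub_nonneg_of_le hb)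
    exact ⟨2 * m + 1, by simp only [Set.mem_Iic]; omega, by simp; omega⟩

theorem zigzagExponent_surjective : zigzagExponent.Surjective := fun b =>
  let ⟨m, _, hm⟩ := Icc_subset_zigzagExponent_image_Iic (2 * b.natAbs + 1) (by constructor <;> omega)
  ⟨m, hm⟩

theorem span_range_eq_top_of_zigzag {k : Type*} [Field k] (χ : ℕ → AddMonoidAlgebra k ℤ)
    (heven : ∀ n : ℕ, (χ (2 * n)).coeff.support ⊆ Finset.Icc (-(n : ℤ)) n ∧
      (χ (2 * n)).coeff (-(n : ℤ)) ≠ 0)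
    (hodd : ∀ n : ℕ, (χ (2 * n + 1)).coeff.support ⊆ Finset.Icc (-(n : ℤ)) (n + 1) ∧
      (χ (2 * n + 1)).coeff ((n : ℤ) + 1) ≠ 0) :
    span k (Set.range χ) = ⊤ := by
  refine span_range_eq_top_of_triangular χ zigzagExponent zigzagExponent_surjective
    (fun n => mem_supported.2 ?_) fun n => ?_
  · refine .trans ?_ (Icc_subset_zigzagExponent_image_Iic n)
    obtain ⟨m, rfl | rfl⟩ := Nat.even_or_odd' n
    · refine (Finset.coe_subset.2 (heven m).1).trans ?_
      rw [Finset.coe_Icc]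
      exact Set.Icc_subset_Icc (by omega) (by omega)
    · refine (Finset.coe_subset.2 (hodd m).1).trans ?_
      rw [Finset.coe_Icc]
      exact Set.Icc_subset_Icc (by omega) (by omega)
  · obtain ⟨m, rfl | rfl⟩ := Nat.even_or_odd' n
    · simpa using (heven m).2
    · simpa using (hodd m).2

theorem coeff_substar (f : Lau) (a : ℤ) : (substar f).coeff a = starRingEnd ℂ (f.coeff (-a)) := by
  simp [substar, Finsupp.equivMapDomain_apply]

def substarₗ : Lau →ₗ⋆[ℂ] Lau where
  toFun := substar
  map_add' f g := by ext a; simp [coeff_substar]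
  map_smul' c f := by ext a; simp [coeff_substar]

theorem substar_linearCombination (χ : ℕ → Lau) (X : ℕ →₀ ℂ) :
    substar (Finsupp.linearCombination ℂ χ X) =
      ∑ j ∈ X.support, starRingEnd ℂ (X j) • substar (χ j) := by
  rw [Finsupp.linearCombination_apply, Finsupp.sum]
  exact (map_sum substarₗ _ _).trans (Finset.sum_congr rfl fun j _ => map_smulₛₗ substarₗ _ _)

theorem apply_mul_linearCombination_mul_substar_linearCombination
    {u : Lau →ₗ[ℂ] ℂ} {ℓ : Lau} {χ : ℕ → Lau} {L : ℕ → ℕ → ℂ}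
    (hgram : ∀ i j, u (ℓ * (χ i * substar (χ j))) = L i j) (X : ℕ →₀ ℂ) :
    u (ℓ * (Finsupp.linearCombination ℂ χ X * substar (Finsupp.linearCombination ℂ χ X))) =
      quadForm L X := by
  rw [substar_linearCombination, Finsupp.linearCombination_apply, Finsupp.sum,
    Finset.sum_mul_sum, quadForm]
  simp only [Finset.mul_sum, map_sum, smul_mul_assoc, mul_smul_comm, map_smul, hgram,
    smul_eq_mul]
  exact Finset.sum_congr rfl fun i _ => Finset.sum_congr rfl fun j _ => by ring

section Orthonormal

variable {u : Lau →ₗ[ℂ] ℂ} {χ : ℕ → Lau}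

theorem apply_linearCombination_mul_substar
    (horth : ∀ i j : ℕ, u (χ i * substar (χ j)) = if i = j then 1 else 0) (X : ℕ →₀ ℂ) (j : ℕ) :
    u (Finsupp.linearCombination ℂ χ X * substar (χ j)) = X j := by
  rw [Finsupp.linearCombination_apply, Finsupp.sum, Finset.sum_mul, map_sum]
  simp only [smul_mul_assoc, map_smul, horth, smul_eq_mul, mul_ite, mul_one, mul_zero,
    Finset.sum_ite_eq', Finsupp.mem_support_iff, ne_eq, ite_not]
  split_ifs with h <;> simp [h]

theorem linearIndependent_of_orthonormal
    (horth : ∀ i j : ℕ, u (χ i * substar (χ j)) = if i = j then 1 else 0) :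
    LinearIndependent ℂ χ :=
  linearIndependent_iff.2 fun X hX => Finsupp.ext fun j => by
    simpa [hX] using (apply_linearCombination_mul_substar horth X j).symm

theorem apply_mul_mul_substar_eq_of_mul_eq_finsum {ℓ : Lau} {L : ℕ → ℕ → ℂ}
    (horth : ∀ i j : ℕ, u (χ i * substar (χ j)) = if i = j then 1 else 0)
    (hLfin : ∀ i : ℕ, (Function.support (L i)).Finite)
    (hL : ∀ i : ℕ, ℓ * χ i = ∑ᶠ j, L i j • χ j) (i j : ℕ) :
    u (ℓ * (χ i * substar (χ j))) = L i j := by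
  have hfin : ℓ * χ i = Finsupp.linearCombination ℂ χ (Finsupp.ofSupportFinite _ (hLfin i)) := by
    rw [hL, Finsupp.linearCombination_apply, Finsupp.sum, finsum_eq_sum_of_support_subset]
    · rfl
    · rw [Finsupp.ofSupportFinite_support, Set.Finite.coe_toFinset]
      exact Function.support_smul_subset_left (L i) χ
  rw [← mul_assoc, hfin, apply_linearCombination_mul_substar horth]
  rfl

end Orthonormal

theorem stmt13_general
    (u : Lau →ₗ[ℂ] ℂ)
    (χ : ℕ → Lau)
    (hzigeven : ∀ k : ℕ,
      (AddMonoidAlgebra.coeff (χ (2 * k))).support ⊆ Finset.Icc (-(k : ℤ)) (k : ℤ) ∧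
      (0 < ((AddMonoidAlgebra.coeff (χ (2 * k))) (-(k : ℤ))).re ∧
        ((AddMonoidAlgebra.coeff (χ (2 * k))) (-(k : ℤ))).im = 0))
    (hzigodd : ∀ k : ℕ,
      (AddMonoidAlgebra.coeff (χ (2 * k + 1))).support ⊆ Finset.Icc (-(k : ℤ)) ((k : ℤ) + 1) ∧
      (0 < ((AddMonoidAlgebra.coeff (χ (2 * k + 1))) ((k : ℤ) + 1)).re ∧
        ((AddMonoidAlgebra.coeff (χ (2 * k + 1))) ((k : ℤ) + 1)).im = 0))
    (horth : ∀ i j : ℕ, u (χ i * substar (χ j)) = if i = j then 1 else 0)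
    (ℓ : Lau)
    (L : ℕ → ℕ → ℂ)
    (hLfin : ∀ i : ℕ, (Function.support (L i)).Finite)
    (hL : ∀ i : ℕ, ℓ * χ i = ∑ᶠ j, L i j • χ j) :
    (∀ i j : ℕ, u (ℓ * (χ i * substar (χ j))) = L i j) ∧
    ((∀ f : Lau, f ≠ 0 →
        0 < (u (ℓ * (f * substar f))).re ∧ (u (ℓ * (f * substar f))).im = 0) ↔
      (∀ X : ℕ →₀ ℂ, X ≠ 0 →
        0 < (quadForm L X).re ∧ (quadForm L X).im = 0)) := by
  have hgram := apply_mul_mul_substar_eq_of_mul_eq_finsum horth hLfin hL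
  refine ⟨hgram, ?_⟩
  let b := Module.Basis.mk (linearIndependent_of_orthonormal horth)
    (span_range_eq_top_of_zigzag χ
      (fun n => ⟨(hzigeven n).1, Complex.ne_zero_of_re_pos (hzigeven n).2.1⟩)
      (fun n => ⟨(hzigodd n).1, Complex.ne_zero_of_re_pos (hzigodd n).2.1⟩)).ge
  refine b.repr.toEquiv.forall_congr fun f => ?_
  have hcoords : f = Finsupp.linearCombination ℂ χ (b.repr f) := by simp [b]
  rw [LinearEquiv.coe_toEquiv, b.repr.map_ne_zero_iff,
    ← apply_mul_linearCombination_mul_substar_linearCombination hgram, ← hcoords]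

/-- For a measure μ on the unit circle with orthonormal zig-zag (CMV) basis χ and
CMV matrix 𝒞 (zχ = 𝒞χ), and any Hermitian Laurent polynomial ℓ, the Gram matrix of
the functional uℓ with respect to χ equals ℓ(𝒞) (the matrix L with ℓχ = Lχ);
consequently uℓ is positive definite iff ℓ(𝒞) is positive definite. -/
theorem stmt13
    (μ : Measure ℂ) [IsFiniteMeasure μ]
    (hcirc : μ {z : ℂ | ‖z‖ ≠ 1} = 0)
    (hinf : ∀ s : Finset ℂ, μ ((↑s : Set ℂ)ᶜ) ≠ 0)
    (u : Lau →ₗ[ℂ] ℂ)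
    (hu : ∀ f : Lau, u f = ∫ z, evalL f z ∂μ)
    (χ : ℕ → Lau)
    (hzigeven : ∀ k : ℕ,
      (AddMonoidAlgebra.coeff (χ (2 * k))).support ⊆ Finset.Icc (-(k : ℤ)) (k : ℤ) ∧
      (0 < ((AddMonoidAlgebra.coeff (χ (2 * k))) (-(k : ℤ))).re ∧
        ((AddMonoidAlgebra.coeff (χ (2 * k))) (-(k : ℤ))).im = 0))
    (hzigodd : ∀ k : ℕ,
      (AddMonoidAlgebra.coeff (χ (2 * k + 1))).support ⊆ Finset.Icc (-(k : ℤ)) ((k : ℤ) + 1) ∧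
      (0 < ((AddMonoidAlgebra.coeff (χ (2 * k + 1))) ((k : ℤ) + 1)).re ∧
        ((AddMonoidAlgebra.coeff (χ (2 * k + 1))) ((k : ℤ) + 1)).im = 0))
    (horth : ∀ i j : ℕ, u (χ i * substar (χ j)) = if i = j then 1 else 0)
    (Cm : ℕ → ℕ → ℂ)
    (hCfin : ∀ i : ℕ, (Function.support (Cm i)).Finite)
    (hC : ∀ i : ℕ, (AddMonoidAlgebra.ofCoeff (Finsupp.single (1 : ℤ) (1 : ℂ)) : Lau) * χ i = ∑ᶠ j, Cm i j • χ j)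
    (ℓ : Lau) (hherm : substar ℓ = ℓ)
    (L : ℕ → ℕ → ℂ)
    (hLfin : ∀ i : ℕ, (Function.support (L i)).Finite)
    (hL : ∀ i : ℕ, ℓ * χ i = ∑ᶠ j, L i j • χ j) :
    (∀ i j : ℕ, u (ℓ * (χ i * substar (χ j))) = L i j) ∧
    ((∀ f : Lau, f ≠ 0 →
        0 < (u (ℓ * (f * substar f))).re ∧ (u (ℓ * (f * substar f))).im = 0) ↔
      (∀ X : ℕ →₀ ℂ, X ≠ 0 →
        0 < (quadForm L X).re ∧ (quadForm L X).im = 0)) :=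
  stmt13_general u χ hzigeven hzigodd horth ℓ L hLfin hL
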